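/- arXiv:2205.14018 — 2 statements merged into one kernel-verified Lean document; each statement's English description precedes it below -/
import Mathlib

section
/- Let 0 ≤ b < a with a ≠ 1 and d > 0. For every natural number n and every i with 0 ≤ i < d^n, the value f_{a,b,d}^n(i) has a base-(ad) representation of length exactly μ_{a,b,d,n}(i); equivalently, f_{a,b,d}^n(i) < (a·d)^{μ_{a,b,d,n}(i)}, where μ_{a,b,d,n}(i) counts the indices 0 ≤ k < n with d ∤ f_{a,b,d}^k(i). -/
/-- `f a b d m = m / d` if `d ∣ m`, else `a * m + b`. -/
def fabd (a b d : ℕ) : ℕ → ℕ := fun m => if d ∣ m then m / d else a * m + b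

/-- `μ a b d n q` counts indices `k < n` with `d ∤ f^[k] q`. -/
def muabd (a b d n q : ℕ) : ℕ :=
  ((Finset.range n).filter (fun k => ¬ d ∣ (fabd a b d)^[k] q)).card

/-!
Track the bound `i < (a d)^c · d^n` along the orbit. A division by `d` consumes one factor `d`;
a step `m ↦ a m + b` with `b < a` gives `a m + b < a (m + 1)`, so it turns one factor `d` into
a factor `a d`. After `n` steps every factor `d` has been consumed and exactly `μ` factors `a d`
have been created.
-/

section

variable {a b d : ℕ}

theorem fabd_lt_of_dvd {i M : ℕ} (h : d ∣ i) (hi : i < M * d) : fabd a b d i < M := by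
  rw [fabd, if_pos h]
  exact Nat.div_lt_of_lt_mul (by rwa [mul_comm])

theorem fabd_lt_of_not_dvd (hb : b < a) {i M : ℕ} (h : ¬ d ∣ i) (hi : i < M * d) :
    fabd a b d i < a * d * M := by
  rw [fabd, if_neg h]
  calc a * i + b < a * (i + 1) := by rw [mul_add_one]; omega
    _ ≤ a * (M * d) := Nat.mul_le_mul_left a hi
    _ = a * d * M := by ring

theorem muabd_succ (n i : ℕ) :
    muabd a b d (n + 1) i = muabd a b d n (fabd a b d i) + if d ∣ i then 0 else 1 := by
  simp only [muabd, Finset.card_filter, Finset.sum_range_succ', Function.iterate_succ_apply,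
    Function.iterate_zero_apply, ite_not]
  -- the two sides differ only in their `Decidable` instances
  rfl

theorem iterate_fabd_lt_pow_add_muabd (hb : b < a) (n : ℕ) {c i : ℕ}
    (hi : i < (a * d) ^ c * d ^ n) :
    (fabd a b d)^[n] i < (a * d) ^ (c + muabd a b d n i) := by
  induction n generalizing c i with
  | zero => simpa [muabd] using hi
  | succ n ih =>
    rw [pow_succ, ← mul_assoc] at hi
    rw [Function.iterate_succ_apply, muabd_succ]
    by_cases h : d ∣ i
    · rw [if_pos h, add_zero]
      exact ih (fabd_lt_of_dvd h hi)
    · rw [if_neg h, ← add_assoc, add_right_comm]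
      refine ih ?_
      rw [pow_succ', mul_assoc]
      exact fabd_lt_of_not_dvd hb h hi

end

theorem iterate_fabd_lt_general (a b d : ℕ) (hb : b < a)
    (n i : ℕ) (hi : i < d ^ n) :
    (fabd a b d)^[n] i < (a * d) ^ (muabd a b d n i) := by
  simpa using iterate_fabd_lt_pow_add_muabd hb n (c := 0) (by simpa using hi)

theorem iterate_fabd_lt (a b d : ℕ) (hb : b < a) (ha : a ≠ 1) (hd : 0 < d)
    (n i : ℕ) (hi : i < d ^ n) :
    (fabd a b d)^[n] i < (a * d) ^ (muabd a b d n i) :=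
  iterate_fabd_lt_general a b d hb n i hi
end

section
/- Let 0 ≤ b < a with a and b of the same parity, a > 1. For every natural number n and every i with 0 ≤ i < 2^n, f'_{a,b}^n(i) < a^{η_{a,b,n}(i)}, where η_{a,b,n}(i) counts the indices 0 ≤ k < n such that f'_{a,b}^k(i) is odd. -/
/-- Accelerated function: `m / 2` if `m` even, `(a * m + b) / 2` if odd. -/
def fab' (a b : ℕ) : ℕ → ℕ := fun m => if Even m then m / 2 else (a * m + b) / 2

/-- `η a b n q` counts indices `k < n` with `f'^[k] q` odd. -/
def etaab (a b n q : ℕ) : ℕ :=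
  ((Finset.range n).filter (fun k => Odd ((fab' a b)^[k] q))).card

lemma etaab_succ (a b n q : ℕ) :
    etaab a b (n+1) q = etaab a b n q + if Odd ((fab' a b)^[n] q) then 1 else 0 := by
  unfold etaab
  rw [Finset.range_add_one, Finset.filter_insert]
  split
  · rw [Finset.card_insert_of_notMem (by simp)]
  · simp

lemma key_fab' (a b : ℕ) (hb : b < a) (ha : 1 < a) (hpar : a % 2 = b % 2) :
    ∀ n c i, i < c * 2 ^ n → (fab' a b)^[n] i < c * a ^ (etaab a b n i) := by
  intro n
  induction n with
  | zero => intro c i hi; simpa [etaab] using hi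
  | succ n ih =>
    intro c i hi
    have hi' : i < 2 * c * 2 ^ n := by
      calc i < c * 2 ^ (n+1) := hi
        _ = 2 * c * 2 ^ n := by ring
    have hIH := ih (2 * c) i hi'
    rw [Function.iterate_succ_apply', etaab_succ]
    set m := (fab' a b)^[n] i with hm
    set E := a ^ (etaab a b n i) with hE
    set t := c * E with htdef
    have hmt : m < 2 * t := by
      calc m < 2 * c * E := hIH
        _ = 2 * t := by ring
    by_cases hpar_m : Even m
    · have hodd : ¬ Odd m := by simpa [Nat.not_odd_iff_even] using hpar_m
      rw [if_neg hodd]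
      have hfab : fab' a b m = m / 2 := by
        simp only [fab', if_pos hpar_m]
      obtain ⟨j, hj⟩ := hpar_m
      have hfj : fab' a b m = j := by omega
      rw [hfj]
      have hjt : j < t := by omega
      calc j < t := hjt
        _ = c * a ^ (etaab a b n i + 0) := by rw [htdef, hE, add_zero]
    · have hoddm : Odd m := Nat.not_even_iff_odd.mp hpar_m
      rw [if_pos hoddm]
      obtain ⟨k, hk⟩ := hoddm
      have habeven : (a + b) % 2 = 0 := by omega
      have hval : fab' a b m = a * k + (a + b) / 2 := by
        simp only [fab', if_neg hpar_m]
        have : a * m + b = 2 * (a * k + (a + b) / 2) := by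
          rw [hk]; ring_nf; omega
        rw [this]
        omega
      rw [hval]
      have hk1 : k + 1 ≤ t := by omega
      have hhalf : (a + b) / 2 ≤ a - 1 := by omega
      have hstep : a * k + (a + b) / 2 < a * (k + 1) := by
        have : a * (k + 1) = a * k + a := by ring
        omega
      have hfin : a * (k + 1) ≤ a * t := Nat.mul_le_mul_left a hk1
      calc a * k + (a + b) / 2 < a * (k + 1) := hstep
        _ ≤ a * t := hfin
        _ = c * a ^ (etaab a b n i + 1) := by rw [htdef, hE, pow_succ]; ring

theorem iterate_fab'_lt (a b : ℕ) (hb : b < a) (ha : 1 < a) (hpar : a % 2 = b % 2)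
    (n i : ℕ) (hi : i < 2 ^ n) :
    (fab' a b)^[n] i < a ^ (etaab a b n i) := by
  have := key_fab' a b hb ha hpar n 1 i (by simpa using hi)
  simpa using this
end
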